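/- arXiv:1209.5885 — 7 statements merged into one kernel-verified Lean document; each statement's English description precedes it below -/
import Mathlib

section
/- Let U(t,τ) be a dissipative process (i.e., admitting a pullback absorbing family 𝔅 = {B_t}). Then A*_t equals the time-dependent ω-limit of 𝔅 at time t, namely A*_t = ⋂_{y ≤ t} closure( ⋃_{τ ≤ y} U(t,τ)B_τ ) in X_t. In particular A*_t is closed, contained in the closure of B_t, and the family {A*_t} is uniformly bounded. -/
open Filter Metric Set Topology

/-- A family of sets is uniformly bounded. -/
def UnifBdd {X : ℝ → Type*} [∀ t, NormedAddCommGroup (X t)] (C : ∀ t, Set (X t)) : Prop :=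
  ∃ R > 0, ∀ t, C t ⊆ closedBall (0 : X t) R

/-- Pullback absorbing family for a process `U`. -/
def PullbackAbsorbing {X : ℝ → Type*} [∀ t, NormedAddCommGroup (X t)]
    (U : ∀ t τ : ℝ, X τ → X t) (B : ∀ t, Set (X t)) : Prop :=
  UnifBdd B ∧ ∀ t : ℝ, ∀ R > 0, ∃ t0 ≤ t, ∀ τ ≤ t0, U t τ '' closedBall 0 R ⊆ B t

/-- Pullback attracting family: every ε-neighborhood family is pullback absorbing. -/
def PullbackAttracting {X : ℝ → Type*} [∀ t, NormedAddCommGroup (X t)]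
    (U : ∀ t τ : ℝ, X τ → X t) (K : ∀ t, Set (X t)) : Prop :=
  UnifBdd K ∧ ∀ ε > 0, PullbackAbsorbing U (fun t => thickening ε (K t))

/-- Set of subsequential limits of a sequence. -/
def LimSet {Y : Type*} [NormedAddCommGroup Y] (y : ℕ → Y) : Set Y :=
  {x | ∃ φ : ℕ → ℕ, StrictMono φ ∧ Tendsto (y ∘ φ) atTop (𝓝 x)}

/-- `A*_t`: union of subsequential limit sets of sequences `U t τₙ xₙ` with
`τₙ → -∞` and `xₙ` uniformly bounded. -/
def AStar {X : ℝ → Type*} [∀ t, NormedAddCommGroup (X t)]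
    (U : ∀ t τ : ℝ, X τ → X t) (t : ℝ) : Set (X t) :=
  {x | ∃ (τ : ℕ → ℝ) (xs : ∀ n, X (τ n)),
      Tendsto τ atTop atBot ∧ (∃ R, ∀ n, ‖xs n‖ ≤ R) ∧
      x ∈ LimSet (fun n => U t (τ n) (xs n))}

/-
A bounded sequence `xₙ` started at times `τₙ → -∞` is eventually absorbed: for every `y ≤ t`,
`U y τₙ xₙ ∈ B_y` for large `n`, so `U t τₙ xₙ = U t y (U y τₙ xₙ)` lies in `⋃_{τ ≤ y} U t τ B_τ`,
and every subsequential limit lies in its closure. Conversely, a point of the ω-limit is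
approximated within `1/(n+1)` by some `U t τₙ zₙ` with `τₙ ≤ t - n` and `zₙ ∈ B_{τₙ}`; these
`zₙ` are uniformly bounded since `𝔅` is. Taking `y = t` in the absorption argument gives
`A*_t ⊆ closure B_t`, whence closedness and uniform boundedness.
-/

section

variable {X : ℝ → Type*} [∀ t, NormedAddCommGroup (X t)]

def pullbackOmegaLimit (U : ∀ t τ : ℝ, X τ → X t) (B : ∀ t, Set (X t)) (t : ℝ) : Set (X t) :=
  ⋂ y ∈ Iic t, closure (⋃ τ ∈ Iic y, U t τ '' B τ)

theorem UnifBdd.mono {C D : ∀ t, Set (X t)} (hD : UnifBdd D) (hCD : ∀ t, C t ⊆ D t) :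
    UnifBdd C :=
  let ⟨R, hR, hDR⟩ := hD
  ⟨R, hR, fun t => (hCD t).trans (hDR t)⟩

theorem UnifBdd.closure {C : ∀ t, Set (X t)} (hC : UnifBdd C) :
    UnifBdd fun t => closure (C t) :=
  let ⟨R, hR, hCR⟩ := hC
  ⟨R, hR, fun t => closure_minimal (hCR t) isClosed_closedBall⟩

variable {U : ∀ t τ : ℝ, X τ → X t} {B : ∀ t, Set (X t)}

theorem isClosed_pullbackOmegaLimit (t : ℝ) : IsClosed (pullbackOmegaLimit U B t) :=
  isClosed_biInter fun _ _ => isClosed_closure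

theorem PullbackAbsorbing.eventually_mem {ι : Type*} {l : Filter ι}
    (hB : PullbackAbsorbing U B) {τ : ι → ℝ} (hτ : Tendsto τ l atBot) (xs : ∀ i, X (τ i))
    {R : ℝ} (hR : ∀ i, ‖xs i‖ ≤ R) (t : ℝ) : ∀ᶠ i in l, U t (τ i) (xs i) ∈ B t := by
  obtain ⟨t0, -, habs⟩ := hB.2 t (max R 1) (lt_max_of_lt_right one_pos)
  filter_upwards [hτ.eventually_le_atBot t0] with i hi
  exact habs (τ i) hi
    ⟨xs i, mem_closedBall_zero_iff.2 ((hR i).trans (le_max_left R 1)), rfl⟩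

theorem AStar_subset_closure (hB : PullbackAbsorbing U B) (t : ℝ) :
    AStar U t ⊆ closure (B t) := by
  rintro x ⟨τ, xs, hτ, ⟨R, hR⟩, φ, hφ, hlim⟩
  exact mem_closure_of_tendsto hlim
    (hB.eventually_mem (hτ.comp hφ.tendsto_atTop) (fun n => xs (φ n)) (fun n => hR (φ n)) t)

theorem AStar_subset_pullbackOmegaLimit
    (hU : ∀ {t τ σ : ℝ}, σ ≤ τ → τ ≤ t → ∀ x : X σ, U t τ (U τ σ x) = U t σ x)
    (hB : PullbackAbsorbing U B) (t : ℝ) : AStar U t ⊆ pullbackOmegaLimit U B t := by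
  rintro x ⟨τ, xs, hτ, ⟨R, hR⟩, φ, hφ, hlim⟩
  simp only [pullbackOmegaLimit, mem_iInter₂, mem_Iic]
  intro y hy
  have hτφ : Tendsto (τ ∘ φ) atTop atBot := hτ.comp hφ.tendsto_atTop
  refine mem_closure_of_tendsto hlim ?_
  filter_upwards [hτφ.eventually_le_atBot y,
    hB.eventually_mem hτφ (fun n => xs (φ n)) (fun n => hR (φ n)) y] with n hτy hmem
  rw [Function.comp_apply, ← hU (σ := τ (φ n)) hτy hy]
  exact mem_biUnion (mem_Iic.2 le_rfl) (mem_image_of_mem _ hmem)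

theorem pullbackOmegaLimit_subset_AStar (hB : UnifBdd B) (t : ℝ) :
    pullbackOmegaLimit U B t ⊆ AStar U t := by
  obtain ⟨R, -, hBR⟩ := hB
  intro x hx
  simp only [pullbackOmegaLimit, mem_iInter₂, mem_Iic] at hx
  have hnear : ∀ n : ℕ, ∃ τ ≤ t - n, ∃ z ∈ B τ, dist (U t τ z) x < 1 / (n + 1) := by
    intro n
    obtain ⟨b, hb, hxb⟩ := Metric.mem_closure_iff.1 (hx (t - n) (by simp)) (1 / (n + 1))
      (by positivity)
    obtain ⟨τ, hτ, z, hz, rfl⟩ := by simpa only [mem_iUnion₂, mem_Iic] using hb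
    exact ⟨τ, hτ, z, hz, by rwa [dist_comm]⟩
  choose τ hτ z hz hdist using hnear
  refine ⟨τ, z, ?_, ⟨R, fun n => mem_closedBall_zero_iff.1 (hBR _ (hz n))⟩,
    id, strictMono_id, ?_⟩
  · refine tendsto_atBot_mono hτ ?_
    simpa only [Function.comp_def, sub_eq_add_neg] using
      tendsto_atBot_add_const_left _ t (tendsto_neg_atTop_atBot.comp tendsto_natCast_atTop_atTop)
  · exact tendsto_iff_dist_tendsto_zero.2 <| squeeze_zero (fun _ => dist_nonneg)
      (fun n => (hdist n).le) tendsto_one_div_add_atTop_nhds_zero_nat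

end

theorem stmt1_general {X : ℝ → Type*} [∀ t, NormedAddCommGroup (X t)]
    (U : ∀ t τ : ℝ, X τ → X t)
    (hU2 : ∀ {t τ σ : ℝ}, σ ≤ τ → τ ≤ t → ∀ x : X σ, U t τ (U τ σ x) = U t σ x)
    (B : ∀ t, Set (X t)) (hB : PullbackAbsorbing U B) :
    (∀ t : ℝ, AStar U t = ⋂ y ∈ Iic t, closure (⋃ τ ∈ Iic y, U t τ '' B τ)) ∧
    (∀ t : ℝ, IsClosed (AStar U t)) ∧
    (∀ t : ℝ, AStar U t ⊆ closure (B t)) ∧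
    UnifBdd (AStar U) := by
  have hω : ∀ t, AStar U t = pullbackOmegaLimit U B t := fun t =>
    (AStar_subset_pullbackOmegaLimit hU2 hB t).antisymm (pullbackOmegaLimit_subset_AStar hB.1 t)
  refine ⟨hω, fun t => ?_, AStar_subset_closure hB, hB.1.closure.mono (AStar_subset_closure hB)⟩
  rw [hω t]
  exact isClosed_pullbackOmegaLimit t

theorem stmt1 {X : ℝ → Type*} [∀ t, NormedAddCommGroup (X t)]
    (U : ∀ t τ : ℝ, X τ → X t)
    (hU1 : ∀ (t : ℝ) (x : X t), U t t x = x)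
    (hU2 : ∀ {t τ σ : ℝ}, σ ≤ τ → τ ≤ t → ∀ x : X σ, U t τ (U τ σ x) = U t σ x)
    (B : ∀ t, Set (X t)) (hB : PullbackAbsorbing U B) :
    (∀ t : ℝ, AStar U t = ⋂ y ∈ Iic t, closure (⋃ τ ∈ Iic y, U t τ '' B τ)) ∧
    (∀ t : ℝ, IsClosed (AStar U t)) ∧
    (∀ t : ℝ, AStar U t ⊆ closure (B t)) ∧
    UnifBdd (AStar U) :=
  stmt1_general U hU2 B hB
end

section
/- If a process U(t,τ) is asymptotically compact (there exists at least one pullback attracting family of compact sets), then the family {A*_t} is the unique time-dependent global attractor: it is a uniformly bounded pullback attracting family of nonempty compact sets and is contained in every pullback attracting family of compact sets. -/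
open Filter Metric Set Topology

lemma tendsto_neg_natCast_atBot : Tendsto (fun n : ℕ => -(n : ℝ)) atTop atBot :=
  tendsto_neg_atBot_iff.mpr tendsto_natCast_atTop_atTop

lemma isClosed_approx {X : ℝ → Type*} [∀ t, NormedAddCommGroup (X t)]
    (U : ∀ t τ : ℝ, X τ → X t) (t R₀ : ℝ) :
    IsClosed {x : X t | ∀ ε > 0, ∀ T ≤ t, ∃ τ ≤ T, ∃ y : X τ,
      ‖y‖ ≤ R₀ ∧ dist x (U t τ y) < ε} := by
  apply isClosed_of_closure_subset
  intro x hx ε hε T hT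
  obtain ⟨w, hwS, hxw⟩ := Metric.mem_closure_iff.mp hx (ε / 2) (half_pos hε)
  obtain ⟨τ, hτ, z, hz, hd⟩ := hwS (ε / 2) (half_pos hε) T hT
  refine ⟨τ, hτ, z, hz, ?_⟩
  calc dist x (U t τ z) ≤ dist x w + dist w (U t τ z) := dist_triangle _ _ _
    _ < ε := by linarith

lemma aStar_key {X : ℝ → Type*} [∀ t, NormedAddCommGroup (X t)]
    (U : ∀ t τ : ℝ, X τ → X t) {K : ∀ t, Set (X t)}
    (hKc : ∀ t, IsCompact (K t)) (hKatt : PullbackAttracting U K)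
    (t : ℝ) (τ : ℕ → ℝ) (hτ : Tendsto τ atTop atBot)
    (xs : ∀ n, X (τ n)) (R : ℝ) (hxs : ∀ n, ‖xs n‖ ≤ R) :
    ∃ z ∈ AStar U t, ∃ φ : ℕ → ℕ, StrictMono φ ∧
      Tendsto (fun n => U t (τ (φ n)) (xs (φ n))) atTop (𝓝 z) := by
  set y : ℕ → X t := fun n => U t (τ n) (xs n) with hy
  have hR0 : (0 : ℝ) ≤ R := le_trans (norm_nonneg _) (hxs 0)
  have hRpos : (0 : ℝ) < R + 1 := by linarith
  have hmem : ∀ ε > 0, ∀ᶠ n in atTop, y n ∈ thickening ε (K t) := by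
    intro ε hε
    obtain ⟨t0, _, habs⟩ := (hKatt.2 ε hε).2 t (R + 1) hRpos
    filter_upwards [hτ.eventually (eventually_le_atBot t0)] with n hn
    exact habs (τ n) hn ⟨xs n, by
      simpa [mem_closedBall, dist_zero_right] using (hxs n).trans (by linarith), rfl⟩
  have Kne : (K t).Nonempty := by
    obtain ⟨n, hn⟩ := (hmem 1 one_pos).exists
    obtain ⟨z, hz, _⟩ := Metric.mem_thickening_iff.mp hn
    exact ⟨z, hz⟩
  choose z hz hdz using fun n => (hKc t).exists_infDist_eq_dist Kne (y n)
  have hdist0 : Tendsto (fun n => dist (y n) (z n)) atTop (𝓝 0) := by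
    have hinf : Tendsto (fun n => infDist (y n) (K t)) atTop (𝓝 0) := by
      rw [Metric.tendsto_atTop]
      intro ε hε
      obtain ⟨N, hN⟩ := (hmem ε hε).exists_forall_of_atTop
      refine ⟨N, fun n hn => ?_⟩
      rw [Real.dist_eq, sub_zero, abs_of_nonneg infDist_nonneg]
      obtain ⟨w, hw, hdw⟩ := Metric.mem_thickening_iff.mp (hN n hn)
      exact (infDist_le_dist_of_mem hw).trans_lt hdw
    simpa [← hdz] using hinf
  obtain ⟨a, ha, φ, hφ, hzconv⟩ := (hKc t).tendsto_subseq hz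
  have hyconv : Tendsto (fun n => y (φ n)) atTop (𝓝 a) := by
    rw [tendsto_iff_dist_tendsto_zero]
    have h1 : Tendsto (fun n => dist (y (φ n)) (z (φ n))) atTop (𝓝 0) :=
      hdist0.comp hφ.tendsto_atTop
    have h2 : Tendsto (fun n => dist (z (φ n)) a) atTop (𝓝 0) :=
      tendsto_iff_dist_tendsto_zero.mp hzconv
    refine squeeze_zero (g := fun n => dist (y (φ n)) (z (φ n)) + dist (z (φ n)) a)
      (fun n => dist_nonneg) (fun n => dist_triangle _ _ _) ?_
    simpa using h1.add h2
  refine ⟨a, ⟨fun n => τ (φ n), fun n => xs (φ n), hτ.comp hφ.tendsto_atTop,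
    ⟨R, fun n => hxs _⟩, id, strictMono_id, by simpa [Function.comp] using hyconv⟩,
    φ, hφ, hyconv⟩

lemma aStar_subset {X : ℝ → Type*} [∀ t, NormedAddCommGroup (X t)]
    (U : ∀ t τ : ℝ, X τ → X t) {K' : ∀ t, Set (X t)}
    (hKc' : ∀ t, IsCompact (K' t)) (hatt' : PullbackAttracting U K') (t : ℝ) :
    AStar U t ⊆ K' t := by
  rintro x ⟨τ, xs, hτ, ⟨R, hR⟩, φ, hφ, hconv⟩
  have hR0 : (0 : ℝ) < R + 1 := by
    have := le_trans (norm_nonneg _) (hR 0); linarith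
  rw [← (hKc' t).isClosed.closure_eq, Metric.mem_closure_iff]
  intro ε hε
  obtain ⟨t0, _, habs⟩ := (hatt'.2 (ε / 2) (half_pos hε)).2 t (R + 1) hR0
  have h1 : ∀ᶠ n in atTop, τ (φ n) ≤ t0 :=
    (hτ.comp hφ.tendsto_atTop).eventually (eventually_le_atBot t0)
  have h2 : ∀ᶠ n in atTop,
      dist (U t (τ (φ n)) (xs (φ n))) x < ε / 2 := by
    have := Metric.tendsto_atTop.mp hconv (ε / 2) (half_pos hε)
    obtain ⟨N, hN⟩ := this
    exact eventually_atTop.mpr ⟨N, fun n hn => hN n hn⟩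
  obtain ⟨n, hn1, hn2⟩ := (h1.and h2).exists
  have hmem : U t (τ (φ n)) (xs (φ n)) ∈ thickening (ε / 2) (K' t) :=
    habs (τ (φ n)) hn1 ⟨xs (φ n), by
      simpa [mem_closedBall, dist_zero_right] using (hR (φ n)).trans (by linarith), rfl⟩
  obtain ⟨z, hz, hdz⟩ := Metric.mem_thickening_iff.mp hmem
  refine ⟨z, hz, ?_⟩
  calc dist x z ≤ dist x (U t (τ (φ n)) (xs (φ n))) + dist (U t (τ (φ n)) (xs (φ n))) z :=
        dist_triangle _ _ _
    _ < ε := by rw [dist_comm] at hn2; linarith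

lemma aStar_eq {X : ℝ → Type*} [∀ t, NormedAddCommGroup (X t)]
    (U : ∀ t τ : ℝ, X τ → X t)
    (hU2 : ∀ {t τ σ : ℝ}, σ ≤ τ → τ ≤ t → ∀ x : X σ, U t τ (U τ σ x) = U t σ x)
    {K : ∀ t, Set (X t)} {R₀ : ℝ} (hbd : ∀ s, K s ⊆ closedBall 0 R₀)
    (hKatt : PullbackAttracting U K) (t : ℝ) :
    AStar U t = {x : X t | ∀ ε > 0, ∀ T ≤ t, ∃ τ ≤ T, ∃ y : X τ,
      ‖y‖ ≤ R₀ + 1 ∧ dist x (U t τ y) < ε} := by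
  ext x
  constructor
  · rintro ⟨τ, xs, hτ, ⟨R, hR⟩, φ, hφ, hconv⟩ ε hε T hT
    have hR0 : (0 : ℝ) < R + 1 := by
      have := le_trans (norm_nonneg _) (hR 0); linarith
    obtain ⟨t0, ht0, habs⟩ := (hKatt.2 1 one_pos).2 T (R + 1) hR0
    have h1 : ∀ᶠ n in atTop, τ (φ n) ≤ min t0 T :=
      (hτ.comp hφ.tendsto_atTop).eventually (eventually_le_atBot _)
    have h2 : ∀ᶠ n in atTop, dist (U t (τ (φ n)) (xs (φ n))) x < ε := by
      obtain ⟨N, hN⟩ := Metric.tendsto_atTop.mp hconv ε hε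
      exact eventually_atTop.mpr ⟨N, fun n hn => hN n hn⟩
    obtain ⟨n, hn1, hn2⟩ := (h1.and h2).exists
    refine ⟨T, le_refl T, U T (τ (φ n)) (xs (φ n)), ?_, ?_⟩
    · have hmem : U T (τ (φ n)) (xs (φ n)) ∈ thickening 1 (K T) :=
        habs (τ (φ n)) (hn1.trans (min_le_left _ _)) ⟨xs (φ n), by
          simpa [mem_closedBall, dist_zero_right] using (hR (φ n)).trans (by linarith), rfl⟩
      obtain ⟨z, hz, hdz⟩ := Metric.mem_thickening_iff.mp hmem
      have hznorm : ‖z‖ ≤ R₀ := by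
        simpa [mem_closedBall, dist_zero_right] using hbd T hz
      calc ‖U T (τ (φ n)) (xs (φ n))‖
          ≤ dist (U T (τ (φ n)) (xs (φ n))) z + ‖z‖ := by
            simpa [dist_zero_right] using dist_triangle (U T (τ (φ n)) (xs (φ n))) z 0
        _ ≤ R₀ + 1 := by linarith
    · rw [hU2 (hn1.trans (min_le_right _ _)) hT]
      rw [dist_comm] at hn2; exact hn2
  · intro hx
    have hpos : ∀ n : ℕ, (0 : ℝ) < 1 / (n + 1) := fun n => by positivity
    choose τ hτle y hy hdist using
      fun n : ℕ => hx (1 / (n + 1)) (hpos n) (min t (-(n : ℝ))) (min_le_left _ _)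
    refine ⟨τ, y, ?_, ⟨R₀ + 1, hy⟩, id, strictMono_id, ?_⟩
    · exact tendsto_atBot_mono (fun n => (hτle n).trans (min_le_right _ _))
        tendsto_neg_natCast_atBot
    · rw [tendsto_iff_dist_tendsto_zero]
      refine squeeze_zero (fun n => dist_nonneg) (fun n => ?_)
        tendsto_one_div_add_atTop_nhds_zero_nat
      simpa [Function.comp, dist_comm] using (hdist n).le

theorem stmt3 {X : ℝ → Type*} [∀ t, NormedAddCommGroup (X t)]
    (U : ∀ t τ : ℝ, X τ → X t)
    (hU1 : ∀ (t : ℝ) (x : X t), U t t x = x)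
    (hU2 : ∀ {t τ σ : ℝ}, σ ≤ τ → τ ≤ t → ∀ x : X σ, U t τ (U τ σ x) = U t σ x)
    (hac : ∃ K : ∀ t, Set (X t), (∀ t, IsCompact (K t)) ∧ PullbackAttracting U K) :
    (∀ t, IsCompact (AStar U t)) ∧ (∀ t, (AStar U t).Nonempty) ∧
    PullbackAttracting U (AStar U) ∧
    ∀ K : ∀ t, Set (X t), (∀ t, IsCompact (K t)) → PullbackAttracting U K →
      ∀ t, AStar U t ⊆ K t := by
  obtain ⟨K, hKc, hKatt⟩ := hac
  obtain ⟨R_K, hRK, hKbd⟩ := hKatt.1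
  have hmin : ∀ K' : ∀ t, Set (X t), (∀ t, IsCompact (K' t)) → PullbackAttracting U K' →
      ∀ t, AStar U t ⊆ K' t := fun K' h1 h2 t => aStar_subset U h1 h2 t
  have hsub : ∀ t, AStar U t ⊆ K t := hmin K hKc hKatt
  have hclosed : ∀ t, IsClosed (AStar U t) := fun t => by
    rw [aStar_eq U hU2 hKbd hKatt t]; exact isClosed_approx U t _
  have hcomp : ∀ t, IsCompact (AStar U t) :=
    fun t => (hKc t).of_isClosed_subset (hclosed t) (hsub t)
  have hne : ∀ t, (AStar U t).Nonempty := fun t => by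
    obtain ⟨z, hz, _⟩ := aStar_key U hKc hKatt t (fun n => -(n : ℝ))
      tendsto_neg_natCast_atBot (fun n => 0) 0 (fun n => by simp)
    exact ⟨z, hz⟩
  refine ⟨hcomp, hne, ⟨⟨R_K, hRK, fun t => (hsub t).trans (hKbd t)⟩, ?_⟩, hmin⟩
  intro ε hε
  refine ⟨⟨R_K + ε, by linarith, fun t => ?_⟩, ?_⟩
  · intro w hw
    obtain ⟨z, hz, hdz⟩ := Metric.mem_thickening_iff.mp hw
    have hznorm : ‖z‖ ≤ R_K := by
      simpa [mem_closedBall, dist_zero_right] using hKbd t (hsub t hz)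
    have : ‖w‖ ≤ dist w z + ‖z‖ := by
      simpa [dist_zero_right] using dist_triangle w z 0
    simp only [mem_closedBall, dist_zero_right]
    linarith
  · intro t R hR
    by_contra hcon
    push_neg at hcon
    choose τ hτle hw using fun n : ℕ => hcon (min t (-(n : ℝ))) (min_le_left _ _)
    have hw' := fun n => Set.not_subset.mp (hw n)
    choose v hv hv2 using hw'
    choose x hx hxe using hv
    have hxR : ∀ n, ‖x n‖ ≤ R := fun n => by
      simpa [mem_closedBall, dist_zero_right] using hx n
    have hτbot : Tendsto τ atTop atBot :=
      tendsto_atBot_mono (fun n => (hτle n).trans (min_le_right _ _))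
        tendsto_neg_natCast_atBot
    obtain ⟨z, hz, φ, hφ, hconv⟩ := aStar_key U hKc hKatt t τ hτbot x R hxR
    have h2 : ∀ᶠ n in atTop, dist (U t (τ (φ n)) (x (φ n))) z < ε := by
      obtain ⟨N, hN⟩ := Metric.tendsto_atTop.mp hconv ε hε
      exact eventually_atTop.mpr ⟨N, fun n hn => hN n hn⟩
    obtain ⟨n, hn⟩ := h2.exists
    apply hv2 (φ n)
    rw [← hxe (φ n)] at *
    exact Metric.mem_thickening_iff.mpr ⟨z, hz, hn⟩
end

section
/- A process U(t,τ) is totally dissipative if and only if there exists a pullback absorbing family {B_t} such that for every t ∈ ℝ, the Kuratowski measure of noncompactness α_t(U(t,τ)B_τ) tends to 0 as τ → −∞. -/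
open Filter Metric Set Topology

/-- Kuratowski measure of noncompactness. -/
noncomputable def kuratowski {Y : Type*} [PseudoMetricSpace Y] (s : Set Y) : ℝ :=
  sInf {d : ℝ | 0 < d ∧ ∃ 𝒞 : Finset (Set Y), (s ⊆ ⋃ c ∈ 𝒞, c) ∧
    ∀ c ∈ 𝒞, EMetric.diam c < ENNReal.ofReal d}

/-! If finite `ε/4`-nets absorb the bounded family `B`, then for `τ` far enough in the past
`U t τ '' B τ` is covered by finitely many balls of diameter `< ε`. Conversely, once
`α_t(U t τ '' B τ) < ε`, one point of `U t τ '' B τ` from each set of a small-diameter cover gives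
a finite `ε`-net of it inside `B t`; the `ε`-neighbourhood of this net is absorbing because, by the
cocycle property, `U t σ` factors through `U t τ '' B τ` as soon as `B τ` absorbs the ball. -/

section Kuratowski

variable {Y : Type*} [PseudoMetricSpace Y]

lemma kuratowski_nonneg (s : Set Y) : 0 ≤ kuratowski s :=
  Real.sInf_nonneg fun _ hd => hd.1.le

lemma kuratowski_le_of_subset_thickening {s F : Set Y} {r d : ℝ} (hF : F.Finite)
    (hs : s ⊆ thickening r F) (hrd : 2 * r < d) (hd : 0 < d) : kuratowski s ≤ d := by
  refine csInf_le ⟨0, fun _ hx => hx.1.le⟩ ⟨hd, hF.toFinset.image (ball · r), ?_, ?_⟩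
  · rw [thickening_eq_biUnion_ball] at hs
    simpa using hs
  · simp only [Finset.mem_image, Set.Finite.mem_toFinset]
    rintro _ ⟨x, -, rfl⟩
    calc ediam (ball x r) ≤ 2 * ENNReal.ofReal r := by
          rw [← eball_ofReal]; exact ediam_eball_le
      _ = ENNReal.ofReal (2 * r) := by rw [ENNReal.ofReal_mul zero_le_two, ENNReal.ofReal_ofNat]
      _ < ENNReal.ofReal d := (ENNReal.ofReal_lt_ofReal_iff hd).2 hrd

-- Boundedness rules out the junk value `sInf ∅ = 0` of an uncoverable set.
lemma exists_cover_of_kuratowski_lt {s : Set Y} {ε : ℝ} (hs : Bornology.IsBounded s)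
    (h : kuratowski s < ε) : ∃ 𝒞 : Finset (Set Y), s ⊆ ⋃ c ∈ 𝒞, c ∧
      ∀ c ∈ 𝒞, ediam c < ENNReal.ofReal ε := by
  have hne : {d : ℝ | 0 < d ∧ ∃ 𝒞 : Finset (Set Y), (s ⊆ ⋃ c ∈ 𝒞, c) ∧
      ∀ c ∈ 𝒞, ediam c < ENNReal.ofReal d}.Nonempty := by
    refine ⟨(ediam s).toReal + 1, by positivity, {s}, by simp, ?_⟩
    simp only [Finset.mem_singleton, forall_eq]
    exact (ENNReal.lt_ofReal_iff_toReal_lt hs.ediam_ne_top).2 (lt_add_one _)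
  obtain ⟨d, ⟨-, 𝒞, hcov, hdiam⟩, hdε⟩ :=
    (csInf_lt_iff ⟨0, fun _ hx => hx.1.le⟩ hne).1 h
  exact ⟨𝒞, hcov, fun c hc => (hdiam c hc).trans_le (ENNReal.ofReal_le_ofReal hdε.le)⟩

lemma exists_finite_subset_thickening_of_cover {s : Set Y} {ε : ℝ} (𝒞 : Finset (Set Y))
    (hcov : s ⊆ ⋃ c ∈ 𝒞, c) (hdiam : ∀ c ∈ 𝒞, ediam c < ENNReal.ofReal ε) :
    ∃ F ⊆ s, F.Finite ∧ s ⊆ thickening ε F := by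
  refine ⟨⋃ c ∈ 𝒞, ⋃ h : (c ∩ s).Nonempty, {h.some}, ?_,
    𝒞.finite_toSet.biUnion fun c _ => finite_iUnion fun _ => finite_singleton _, ?_⟩
  · simp only [iUnion_subset_iff, singleton_subset_iff]
    exact fun c _ h => h.some_mem.2
  · intro y hy
    obtain ⟨c, hc, hyc⟩ := mem_iUnion₂.1 (hcov hy)
    have h : (c ∩ s).Nonempty := ⟨y, hyc, hy⟩
    refine mem_thickening_iff.2 ⟨h.some, mem_biUnion hc (mem_iUnion_of_mem h rfl), ?_⟩
    rw [← edist_lt_ofReal]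
    exact (edist_le_ediam_of_mem hyc h.some_mem.1).trans_lt (hdiam c hc)

lemma exists_finite_subset_thickening_of_kuratowski_lt {s : Set Y} {ε : ℝ}
    (hs : Bornology.IsBounded s) (h : kuratowski s < ε) : ∃ F ⊆ s, F.Finite ∧ s ⊆ thickening ε F :=
  let ⟨𝒞, hcov, hdiam⟩ := exists_cover_of_kuratowski_lt hs h
  exists_finite_subset_thickening_of_cover 𝒞 hcov hdiam

end Kuratowski

def TotallyDissipative {X : ℝ → Type*} [∀ t, NormedAddCommGroup (X t)]
    (U : ∀ t τ : ℝ, X τ → X t) : Prop :=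
  ∀ ε > (0:ℝ), ∃ F : ∀ t, Set (X t), (∀ t, (F t).Finite) ∧
    PullbackAbsorbing U (fun t => thickening ε (F t))

section Dissipativity

variable {X : ℝ → Type*} [∀ t, NormedAddCommGroup (X t)] {U : ∀ t τ : ℝ, X τ → X t}
  {B C : ∀ t, Set (X t)}

lemma UnifBdd.isBounded (hB : UnifBdd B) (t : ℝ) : Bornology.IsBounded (B t) :=
  let ⟨_, _, hBR⟩ := hB
  isBounded_closedBall.subset (hBR t)

lemma UnifBdd.mono_s5 (hC : UnifBdd C) (hBC : ∀ t, B t ⊆ C t) : UnifBdd B :=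
  let ⟨R, hR, hCR⟩ := hC
  ⟨R, hR, fun t => (hBC t).trans (hCR t)⟩

lemma UnifBdd.thickening (hB : UnifBdd B) {ε : ℝ} (hε : 0 ≤ ε) :
    UnifBdd fun t => thickening ε (B t) := by
  obtain ⟨R, hR, hBR⟩ := hB
  refine ⟨R + ε, by positivity, fun t y hy => ?_⟩
  obtain ⟨z, hz, hyz⟩ := mem_thickening_iff.1 hy
  have hz0 := mem_closedBall.1 (hBR t hz)
  exact mem_closedBall.2 (by linarith [dist_triangle y z 0])

lemma PullbackAbsorbing.eventually_image_subset (hB : PullbackAbsorbing U B) (t : ℝ) :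
    ∀ᶠ τ in atBot, U t τ '' B τ ⊆ B t := by
  obtain ⟨⟨R, hR, hBR⟩, habs⟩ := hB
  obtain ⟨t0, -, ht0⟩ := habs t R hR
  filter_upwards [eventually_le_atBot t0] with τ hτ
  exact (image_mono (hBR τ)).trans (ht0 τ hτ)

lemma PullbackAbsorbing.of_image_subset
    (hU : ∀ {t τ σ : ℝ}, σ ≤ τ → τ ≤ t → ∀ x : X σ, U t τ (U τ σ x) = U t σ x)
    (hB : PullbackAbsorbing U B) (hC : UnifBdd C) (hBC : ∀ t, ∃ τ ≤ t, U t τ '' B τ ⊆ C t) :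
    PullbackAbsorbing U C := by
  refine ⟨hC, fun t R hR => ?_⟩
  obtain ⟨τ, hτt, hτ⟩ := hBC t
  obtain ⟨t0, ht0τ, ht0⟩ := hB.2 τ R hR
  refine ⟨t0, ht0τ.trans hτt, fun σ hσ => ?_⟩
  calc U t σ '' closedBall 0 R = U t τ '' (U τ σ '' closedBall 0 R) := by
        rw [image_image]
        exact image_congr fun x _ => (hU (hσ.trans ht0τ) hτt x).symm
    _ ⊆ U t τ '' B τ := image_mono (ht0 σ hσ)
    _ ⊆ C t := hτ

lemma TotallyDissipative.tendsto_kuratowski (hU : TotallyDissipative U) (hB : UnifBdd B)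
    (t : ℝ) : Tendsto (fun τ => kuratowski (U t τ '' B τ)) atBot (𝓝 0) := by
  refine tendsto_order.2 ⟨fun a ha => Eventually.of_forall fun τ =>
    ha.trans_le (kuratowski_nonneg _), fun ε hε => ?_⟩
  obtain ⟨F, hF, hFabs⟩ := hU (ε / 4) (by positivity)
  obtain ⟨R, hR, hBR⟩ := hB
  obtain ⟨t0, -, ht0⟩ := hFabs.2 t R hR
  filter_upwards [eventually_le_atBot t0] with τ hτ
  calc kuratowski (U t τ '' B τ) ≤ 3 * ε / 4 :=
        kuratowski_le_of_subset_thickening (hF t) ((image_mono (hBR τ)).trans (ht0 τ hτ))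
          (by linarith) (by positivity)
    _ < ε := by linarith

lemma TotallyDissipative.of_tendsto_kuratowski
    (hU : ∀ {t τ σ : ℝ}, σ ≤ τ → τ ≤ t → ∀ x : X σ, U t τ (U τ σ x) = U t σ x)
    (hB : PullbackAbsorbing U B)
    (hα : ∀ t, Tendsto (fun τ => kuratowski (U t τ '' B τ)) atBot (𝓝 0)) :
    TotallyDissipative U := by
  intro ε hε
  have hfinite (t : ℝ) : ∃ F ⊆ B t, F.Finite ∧ ∃ τ ≤ t, U t τ '' B τ ⊆ thickening ε F := by
    obtain ⟨τ, hτB, hτα, hτt⟩ := ((hB.eventually_image_subset t).and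
      (((hα t).eventually (eventually_lt_nhds hε)).and (eventually_le_atBot t))).exists
    obtain ⟨F, hFs, hF, hcover⟩ :=
      exists_finite_subset_thickening_of_kuratowski_lt ((hB.1.isBounded t).subset hτB) hτα
    exact ⟨F, hFs.trans hτB, hF, τ, hτt, hcover⟩
  choose F hFB hF τ hτ hcover using hfinite
  exact ⟨F, hF, hB.of_image_subset hU ((hB.1.mono_s5 hFB).thickening hε.le)
    fun t => ⟨τ t, hτ t, hcover t⟩⟩

end Dissipativity

theorem stmt5_general {X : ℝ → Type*} [∀ t, NormedAddCommGroup (X t)]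
    (U : ∀ t τ : ℝ, X τ → X t)
    (hU2 : ∀ {t τ σ : ℝ}, σ ≤ τ → τ ≤ t → ∀ x : X σ, U t τ (U τ σ x) = U t σ x) :
    (∀ ε > (0:ℝ), ∃ F : ∀ t, Set (X t), (∀ t, (F t).Finite) ∧
        PullbackAbsorbing U (fun t => thickening ε (F t))) ↔
    ∃ B : ∀ t, Set (X t), PullbackAbsorbing U B ∧
      ∀ t : ℝ, Tendsto (fun τ => kuratowski (U t τ '' B τ)) atBot (𝓝 0) := by
  refine ⟨fun hU => ?_, fun ⟨B, hB, hα⟩ => TotallyDissipative.of_tendsto_kuratowski hU2 hB hα⟩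
  obtain ⟨F, -, hF⟩ := hU 1 one_pos
  exact ⟨_, hF, TotallyDissipative.tendsto_kuratowski hU hF.1⟩

theorem stmt5 {X : ℝ → Type*} [∀ t, NormedAddCommGroup (X t)]
    (U : ∀ t τ : ℝ, X τ → X t)
    (hU1 : ∀ (t : ℝ) (x : X t), U t t x = x)
    (hU2 : ∀ {t τ σ : ℝ}, σ ≤ τ → τ ≤ t → ∀ x : X σ, U t τ (U τ σ x) = U t σ x) :
    (∀ ε > (0:ℝ), ∃ F : ∀ t, Set (X t), (∀ t, (F t).Finite) ∧
        PullbackAbsorbing U (fun t => thickening ε (F t))) ↔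
    ∃ B : ∀ t, Set (X t), PullbackAbsorbing U B ∧
      ∀ t : ℝ, Tendsto (fun τ => kuratowski (U t τ '' B τ)) atBot (𝓝 0) :=
  stmt5_general U hU2
end

section
/- Let 𝔄 = {A_t} be a time-dependent global attractor (uniformly bounded pullback attracting family of compact sets, minimal among such families). If there exists T > 0 such that A_t ⊂ U(t, t−T) A_{t−T} for all t ∈ ℝ, then 𝔄 is invariant: U(t,τ)A_τ = A_t for all t ≥ τ. -/
open Filter Metric Set Topology

/-- The backward time sequence `t, t-T, t-2T, …`. -/
def sig (t T : ℝ) : ℕ → ℝ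
  | 0 => t
  | n + 1 => sig t T n - T

lemma sig_eq (t T : ℝ) (n : ℕ) : sig t T n = t - n * T := by
  induction n with
  | zero => simp [sig]
  | succ n ih => rw [sig, ih]; push_cast; ring

lemma sig_anti {t T : ℝ} (hT : 0 ≤ T) : Antitone (sig t T) := by
  apply antitone_nat_of_succ_le
  intro n
  rw [sig]
  exact sub_le_self _ hT

lemma sig_le {t T : ℝ} (hT : 0 ≤ T) (n : ℕ) : sig t T n ≤ t :=
  sig_anti hT (Nat.zero_le n)

lemma sig_tendsto {t T : ℝ} (hT : 0 < T) : Tendsto (sig t T) atTop atBot := by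
  have h1 : Tendsto (fun n : ℕ => t - n * T) atTop atBot := by
    rw [show (fun n : ℕ => t - n * T) = fun n : ℕ => t + -(n * T) from by
      funext n; ring]
    exact tendsto_atBot_add_const_left _ t
      (tendsto_neg_atTop_atBot.comp (tendsto_natCast_atTop_atTop.atTop_mul_const hT))
  rw [show sig t T = fun n : ℕ => t - n * T from funext (sig_eq t T)]
  exact h1

/-- Backward chain through the attractor from `x ∈ A t`. -/
noncomputable def chain {X : ℝ → Type*} [∀ t, NormedAddCommGroup (X t)]
    (U : ∀ t τ : ℝ, X τ → X t) (A : ∀ t, Set (X t)) (T : ℝ)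
    (hsub : ∀ t : ℝ, A t ⊆ U t (t - T) '' A (t - T))
    (t : ℝ) (x : X t) (hx : x ∈ A t) :
    ∀ n, {p : X (sig t T n) // p ∈ A (sig t T n)}
  | 0 => ⟨x, hx⟩
  | n + 1 =>
      ⟨((Set.mem_image _ _ _).1 (hsub (sig t T n) (chain U A T hsub t x hx n).2)).choose,
       ((Set.mem_image _ _ _).1 (hsub (sig t T n) (chain U A T hsub t x hx n).2)).choose_spec.1⟩

lemma chain_step {X : ℝ → Type*} [∀ t, NormedAddCommGroup (X t)]
    (U : ∀ t τ : ℝ, X τ → X t) (A : ∀ t, Set (X t)) (T : ℝ)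
    (hsub : ∀ t : ℝ, A t ⊆ U t (t - T) '' A (t - T))
    (t : ℝ) (x : X t) (hx : x ∈ A t) (n : ℕ) :
    U (sig t T n) (sig t T (n + 1)) (chain U A T hsub t x hx (n + 1)).1
      = (chain U A T hsub t x hx n).1 :=
  ((Set.mem_image _ _ _).1 (hsub (sig t T n) (chain U A T hsub t x hx n).2)).choose_spec.2

lemma chain_tel {X : ℝ → Type*} [∀ t, NormedAddCommGroup (X t)]
    (U : ∀ t τ : ℝ, X τ → X t)
    (hU1 : ∀ (t : ℝ) (x : X t), U t t x = x)
    (hU2 : ∀ {t τ σ : ℝ}, σ ≤ τ → τ ≤ t → ∀ x : X σ, U t τ (U τ σ x) = U t σ x)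
    (A : ∀ t, Set (X t)) (T : ℝ) (hT : 0 < T)
    (hsub : ∀ t : ℝ, A t ⊆ U t (t - T) '' A (t - T))
    (t : ℝ) (x : X t) (hx : x ∈ A t) :
    ∀ n m : ℕ, n ≤ m →
      U (sig t T n) (sig t T m) (chain U A T hsub t x hx m).1
        = (chain U A T hsub t x hx n).1 := by
  intro n m hnm
  induction m, hnm using Nat.le_induction with
  | base => exact hU1 _ _
  | succ m hnm ih =>
    have h1 : sig t T (m + 1) ≤ sig t T m := sig_anti hT.le (Nat.le_succ m)
    have h2 : sig t T m ≤ sig t T n := sig_anti hT.le hnm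
    rw [← hU2 h1 h2, chain_step U A T hsub t x hx m, ih]

/-- `A*_t ⊆ A_t`. -/
lemma astar_subset {X : ℝ → Type*} [∀ t, NormedAddCommGroup (X t)]
    (U : ∀ t τ : ℝ, X τ → X t) (A : ∀ t, Set (X t))
    (hAcpt : ∀ t, IsCompact (A t)) (hAattr : PullbackAttracting U A) (t : ℝ) :
    AStar U t ⊆ A t := by
  rintro x ⟨τ, xs, hτ, ⟨R, hR⟩, φ, hφ, hlim⟩
  rw [← (hAcpt t).isClosed.closure_eq, closure_eq_iInter_cthickening]
  simp only [Set.mem_iInter]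
  intro ε hε
  obtain ⟨-, habs⟩ := hAattr.2 ε hε
  obtain ⟨t0, _, hB⟩ := habs t (max R 1) (lt_max_of_lt_right one_pos)
  have hcomp : Tendsto (τ ∘ φ) atTop atBot := hτ.comp hφ.tendsto_atTop
  have hev : ∀ᶠ n in atTop, U t (τ (φ n)) (xs (φ n)) ∈ thickening ε (A t) := by
    filter_upwards [hcomp.eventually_le_atBot t0] with n hn
    exact hB _ hn ⟨xs (φ n),
      by simpa [mem_closedBall_zero_iff] using (hR (φ n)).trans (le_max_left R 1), rfl⟩
  exact closure_thickening_subset_cthickening ε (A t)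
    (mem_closure_of_tendsto hlim hev)

theorem stmt6 {X : ℝ → Type*} [∀ t, NormedAddCommGroup (X t)]
    (U : ∀ t τ : ℝ, X τ → X t)
    (hU1 : ∀ (t : ℝ) (x : X t), U t t x = x)
    (hU2 : ∀ {t τ σ : ℝ}, σ ≤ τ → τ ≤ t → ∀ x : X σ, U t τ (U τ σ x) = U t σ x)
    (A : ∀ t, Set (X t))
    (hAcpt : ∀ t, IsCompact (A t)) (hAattr : PullbackAttracting U A)
    (hAmin : ∀ K : ∀ t, Set (X t), (∀ t, IsCompact (K t)) → PullbackAttracting U K →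
      ∀ t, A t ⊆ K t)
    (T : ℝ) (hT : 0 < T)
    (hsub : ∀ t : ℝ, A t ⊆ U t (t - T) '' A (t - T)) :
    ∀ τ t : ℝ, τ ≤ t → U t τ '' A τ = A t := by
  obtain ⟨R, hRpos, hbdd⟩ := hAattr.1
  intro τ t hτt
  apply Set.Subset.antisymm
  · -- U t τ '' A τ ⊆ A t
    rintro x ⟨y, hy, rfl⟩
    set c := chain U A T hsub τ y hy with hc
    have htel := chain_tel U hU1 hU2 A T hT hsub τ y hy
    have hbase : ∀ m : ℕ, U τ (sig τ T m) (c m).1 = y := fun m => htel 0 m (Nat.zero_le m)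
    apply astar_subset U A hAcpt hAattr t
    refine ⟨sig τ T, fun n => (c n).1, sig_tendsto hT, ⟨R, fun n => ?_⟩, id, strictMono_id, ?_⟩
    · exact mem_closedBall_zero_iff.1 (hbdd _ (c n).2)
    · have : (fun n => U t (sig τ T n) (c n).1) = fun _ => U t τ y := by
        funext n
        rw [← hU2 (sig_le hT.le n) hτt, hbase]
      rw [Function.comp_id, this]
      exact tendsto_const_nhds
  · -- A t ⊆ U t τ '' A τ
    intro x hx
    set c := chain U A T hsub t x hx with hc
    have htel := chain_tel U hU1 hU2 A T hT hsub t x hx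
    obtain ⟨N, hN⟩ : ∃ N : ℕ, sig t T N ≤ τ :=
      ((sig_tendsto hT).eventually_le_atBot τ).exists
    refine ⟨U τ (sig t T N) (c N).1, ?_, ?_⟩
    · apply astar_subset U A hAcpt hAattr τ
      refine ⟨fun k => sig t T (k + N), fun k => (c (k + N)).1,
        (sig_tendsto hT).comp (tendsto_add_atTop_nat N), ⟨R, fun k => ?_⟩,
        id, strictMono_id, ?_⟩
      · exact mem_closedBall_zero_iff.1 (hbdd _ (c (k + N)).2)
      · have : (fun k => U τ (sig t T (k + N)) (c (k + N)).1)
            = fun _ => U τ (sig t T N) (c N).1 := by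
          funext k
          rw [← hU2 (sig_anti hT.le (Nat.le_add_left N k)) hN, htel N (k + N) (Nat.le_add_left N k)]
        rw [Function.comp_id, this]
        exact tendsto_const_nhds
    · rw [hU2 hN hτt]
      exact htel 0 N (Nat.zero_le N)
end

section
/- If U(t,τ) is a T-closed process for some T > 0 (i.e., each map U(t, t−T): X_{t−T} → X_t is a closed map) and possesses a time-dependent global attractor 𝔄 = {A_t}, then 𝔄 is invariant: U(t,τ)A_τ = A_t for all t ≥ τ. -/
open Filter Metric Set Topology

section Aux

variable {X : ℝ → Type*} [∀ t, NormedAddCommGroup (X t)]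
  (U : ∀ t τ : ℝ, X τ → X t) (A : ∀ t, Set (X t))

/-- Each section of a pullback-attracting family is nonempty. -/
lemma aux_nonempty (hAattr : PullbackAttracting U A) (t : ℝ) : (A t).Nonempty := by
  obtain ⟨_, habs⟩ := (hAattr.2 1 one_pos)
  obtain ⟨t0, ht0, h⟩ := habs t 1 one_pos
  have h0 : (0 : X t0) ∈ closedBall (0 : X t0) 1 := mem_closedBall_self zero_le_one
  have := h t0 le_rfl ⟨0, h0, rfl⟩
  rw [mem_thickening_iff] at this
  obtain ⟨z, hz, _⟩ := this
  exact ⟨z, hz⟩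

/-- The distance from a bounded pullback orbit to the attractor tends to 0. -/
lemma aux_infDist (hAattr : PullbackAttracting U A) (t : ℝ) (τ : ℕ → ℝ)
    (xs : ∀ n, X (τ n)) (hτ : Tendsto τ atTop atBot) (R : ℝ) (hR : ∀ n, ‖xs n‖ ≤ R) :
    Tendsto (fun n => infDist (U t (τ n) (xs n)) (A t)) atTop (𝓝 0) := by
  rw [Metric.tendsto_atTop]
  intro ε hε
  obtain ⟨_, habs⟩ := hAattr.2 ε hε
  have hR' : (0:ℝ) < max R 1 := lt_of_lt_of_le one_pos (le_max_right _ _)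
  obtain ⟨t0, ht0, h⟩ := habs t (max R 1) hR'
  obtain ⟨N, hN⟩ := (eventually_atTop.1 (hτ.eventually (eventually_le_atBot t0)))
  refine ⟨N, fun n hn => ?_⟩
  have hx : xs n ∈ closedBall (0 : X (τ n)) (max R 1) :=
    mem_closedBall_zero_iff.2 ((hR n).trans (le_max_left _ _))
  have hmem : U t (τ n) (xs n) ∈ thickening ε (A t) := h (τ n) (hN n hn) ⟨xs n, hx, rfl⟩
  rw [mem_thickening_iff] at hmem
  obtain ⟨z, hz, hd⟩ := hmem
  have h1 : infDist (U t (τ n) (xs n)) (A t) < ε :=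
    lt_of_le_of_lt (infDist_le_dist_of_mem hz) hd
  rw [Real.dist_eq, sub_zero, abs_of_nonneg infDist_nonneg]
  exact h1

/-- `A*_t ⊆ A_t`. -/
lemma aux_star_subset (hAcpt : ∀ t, IsCompact (A t)) (hAattr : PullbackAttracting U A)
    (t : ℝ) : AStar U t ⊆ A t := by
  rintro x ⟨τ, xs, hτ, ⟨R, hR⟩, φ, hφ, hlim⟩
  have h0 := (aux_infDist U A hAattr t τ xs hτ R hR).comp hφ.tendsto_atTop
  have h1 : Tendsto (fun n => infDist (U t (τ (φ n)) (xs (φ n))) (A t)) atTop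
      (𝓝 (infDist x (A t))) := ((continuous_infDist_pt (A t)).tendsto x).comp hlim
  have h2 : infDist x (A t) = 0 := tendsto_nhds_unique h1 h0
  have h3 : x ∈ closure (A t) :=
    (mem_closure_iff_infDist_zero (aux_nonempty U A hAattr t)).2 h2
  rwa [(hAcpt t).isClosed.closure_eq] at h3

/-- Extraction: any bounded pullback orbit has a subsequence converging to a point of
`A*_t`. -/
lemma aux_extract (hAcpt : ∀ t, IsCompact (A t)) (hAattr : PullbackAttracting U A)
    (t : ℝ) (τ : ℕ → ℝ) (xs : ∀ n, X (τ n)) (hτ : Tendsto τ atTop atBot)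
    (R : ℝ) (hR : ∀ n, ‖xs n‖ ≤ R) :
    ∃ a ∈ AStar U t, ∃ φ : ℕ → ℕ, StrictMono φ ∧
      Tendsto (fun n => U t (τ (φ n)) (xs (φ n))) atTop (𝓝 a) := by
  set y : ℕ → X t := fun n => U t (τ n) (xs n) with hy
  have hinf : Tendsto (fun n => infDist (y n) (A t)) atTop (𝓝 0) :=
    aux_infDist U A hAattr t τ xs hτ R hR
  have hne := aux_nonempty U A hAattr t
  have hch : ∀ n, ∃ z ∈ A t, infDist (y n) (A t) = dist (y n) z := fun n =>
    (hAcpt t).exists_infDist_eq_dist hne (y n)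
  choose a ha hda using hch
  obtain ⟨b, hb, φ, hφ, hconv⟩ := (hAcpt t).tendsto_subseq ha
  have hyb : Tendsto (fun n => y (φ n)) atTop (𝓝 b) := by
    rw [tendsto_iff_dist_tendsto_zero]
    have hbd : ∀ n, dist (y (φ n)) b ≤
        infDist (y (φ n)) (A t) + dist (a (φ n)) b := fun n => by
      calc dist (y (φ n)) b ≤ dist (y (φ n)) (a (φ n)) + dist (a (φ n)) b := dist_triangle _ _ _
        _ = infDist (y (φ n)) (A t) + dist (a (φ n)) b := by rw [hda]
    have hlim2 : Tendsto (fun n => infDist (y (φ n)) (A t) + dist (a (φ n)) b) atTop (𝓝 0) := by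
      have h1 := hinf.comp hφ.tendsto_atTop
      have h2 : Tendsto (fun n => dist (a (φ n)) b) atTop (𝓝 0) :=
        tendsto_iff_dist_tendsto_zero.1 hconv
      simpa using h1.add h2
    exact squeeze_zero (fun n => dist_nonneg) hbd hlim2
  refine ⟨b, ⟨fun n => τ (φ n), fun n => xs (φ n), hτ.comp hφ.tendsto_atTop,
    ⟨R, fun n => hR _⟩, id, strictMono_id, hyb⟩, φ, hφ, hyb⟩

/-- `A_t = closure (A*_t)`, via minimality. -/
lemma aux_eq (hAcpt : ∀ t, IsCompact (A t)) (hAattr : PullbackAttracting U A)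
    (hAmin : ∀ K : ∀ t, Set (X t), (∀ t, IsCompact (K t)) → PullbackAttracting U K →
      ∀ t, A t ⊆ K t) (t : ℝ) : A t = closure (AStar U t) := by
  have hsub : ∀ s, closure (AStar U s) ⊆ A s := fun s =>
    closure_minimal (aux_star_subset U A hAcpt hAattr s) (hAcpt s).isClosed
  obtain ⟨R0, hR0, hbd⟩ := hAattr.1
  refine le_antisymm ?_ (hsub t)
  refine hAmin (fun s => closure (AStar U s)) (fun s =>
    (hAcpt s).of_isClosed_subset isClosed_closure (hsub s)) ?_ t
  constructor
  · exact ⟨R0, hR0, fun s => (hsub s).trans (hbd s)⟩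
  · intro ε hε
    constructor
    · refine ⟨R0 + ε, by positivity, fun s x hx => ?_⟩
      rw [mem_thickening_iff] at hx
      obtain ⟨z, hz, hd⟩ := hx
      have hz' : ‖z‖ ≤ R0 := mem_closedBall_zero_iff.1 (hbd s ((hsub s) hz))
      rw [mem_closedBall_zero_iff]
      calc ‖x‖ = ‖x - z + z‖ := by rw [sub_add_cancel]
        _ ≤ ‖x - z‖ + ‖z‖ := norm_add_le _ _
        _ ≤ ε + R0 := add_le_add (le_of_lt (by rwa [← dist_eq_norm])) hz'
        _ = R0 + ε := by ring
    · intro t R hRpos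
      by_contra hcon
      push_neg at hcon
      have hcon' : ∀ n : ℕ, ∃ σ ≤ min t (-(n:ℝ)), ∃ x : X σ, x ∈ closedBall (0 : X σ) R ∧
          U t σ x ∉ thickening ε (closure (AStar U t)) := by
        intro n
        obtain ⟨σ, hσ, hns⟩ := hcon (min t (-(n:ℝ))) (min_le_left _ _)
        rw [not_subset] at hns
        obtain ⟨w, ⟨x, hx, rfl⟩, hw⟩ := hns
        exact ⟨σ, hσ, x, hx, hw⟩
      choose σ hσ x hx hnot using hcon'
      have hσbot : Tendsto σ atTop atBot := by
        refine tendsto_atBot_mono (fun n => (hσ n).trans (min_le_right _ _)) ?_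
        exact tendsto_neg_atTop_atBot.comp tendsto_natCast_atTop_atTop
      have hxR : ∀ n, ‖x n‖ ≤ R := fun n => mem_closedBall_zero_iff.1 (hx n)
      obtain ⟨a, haS, ψ, hψ, hconv⟩ := aux_extract U A hAcpt hAattr t σ x hσbot R hxR
      have haT : a ∈ thickening ε (AStar U t) :=
        mem_thickening_iff.2 ⟨a, haS, by simpa using hε⟩
      have hev : ∀ᶠ n in atTop, U t (σ (ψ n)) (x (ψ n)) ∈ thickening ε (AStar U t) :=
        hconv.eventually (isOpen_thickening.mem_nhds haT)
      obtain ⟨n, hn⟩ := hev.exists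
      exact hnot (ψ n) (thickening_mono le_rfl _ |>.trans
        (thickening_subset_of_subset ε subset_closure) hn)

end Aux

set_option maxHeartbeats 1000000 in
theorem stmt7 {X : ℝ → Type*} [∀ t, NormedAddCommGroup (X t)]
    (U : ∀ t τ : ℝ, X τ → X t)
    (hU1 : ∀ (t : ℝ) (x : X t), U t t x = x)
    (hU2 : ∀ {t τ σ : ℝ}, σ ≤ τ → τ ≤ t → ∀ x : X σ, U t τ (U τ σ x) = U t σ x)
    (T : ℝ) (hT : 0 < T)
    (hTclosed : ∀ (t : ℝ) (x : ℕ → X (t - T)) (ξ : X (t - T)) (ζ : X t),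
      Tendsto x atTop (𝓝 ξ) → Tendsto (fun n => U t (t - T) (x n)) atTop (𝓝 ζ) →
        U t (t - T) ξ = ζ)
    (A : ∀ t, Set (X t))
    (hAcpt : ∀ t, IsCompact (A t)) (hAattr : PullbackAttracting U A)
    (hAmin : ∀ K : ∀ t, Set (X t), (∀ t, IsCompact (K t)) → PullbackAttracting U K →
      ∀ t, A t ⊆ K t) :
    ∀ τ t : ℝ, τ ≤ t → U t τ '' A τ = A t := by
  have hAeq : ∀ t, A t = closure (AStar U t) := aux_eq U A hAcpt hAattr hAmin
  obtain ⟨R0, hR0, hbd⟩ := hAattr.1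
  -- Step (a): `A t ⊆ U t (t-T) '' A (t-T)`.
  have stepT : ∀ t : ℝ, A t ⊆ U t (t - T) '' A (t - T) := by
    intro t
    set S : Set (X t) := U t (t - T) '' A (t - T) with hS
    have hSclosed : IsClosed S := by
      apply IsSeqClosed.isClosed
      intro u ζ hu hlim
      have hch : ∀ n, ∃ v ∈ A (t - T), U t (t - T) v = u n := fun n => hu n
      choose v hv hvu using hch
      obtain ⟨ξ, hξ, φ, hφ, hvconv⟩ := (hAcpt (t - T)).tendsto_subseq hv
      have h2 : Tendsto (fun n => U t (t - T) (v (φ n))) atTop (𝓝 ζ) := by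
        have := hlim.comp hφ.tendsto_atTop
        exact this.congr (fun n => (hvu (φ n)).symm)
      exact ⟨ξ, hξ, hTclosed t (fun n => v (φ n)) ξ ζ hvconv h2⟩
    have hstar : AStar U t ⊆ S := by
      rintro x ⟨τ, xs, hτ, ⟨R, hR⟩, φ, hφ, hlim⟩
      set σ : ℕ → ℝ := fun n => τ (φ n) with hσdef
      set z : ∀ n, X (σ n) := fun n => xs (φ n) with hzdef
      have hσ : Tendsto σ atTop atBot := hτ.comp hφ.tendsto_atTop
      have hzR : ∀ n, ‖z n‖ ≤ R := fun n => hR _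
      have hglim : Tendsto (fun n => U t (σ n) (z n)) atTop (𝓝 x) := hlim
      -- intermediate points at time t - T
      set w : ℕ → X (t - T) := fun n => U (t - T) (σ n) (z n) with hwdef
      obtain ⟨a, haS, ψ, hψ, hwconv⟩ :=
        aux_extract U A hAcpt hAattr (t - T) σ z hσ R hzR
      have haA : a ∈ A (t - T) := aux_star_subset U A hAcpt hAattr (t - T) haS
      have hev : ∀ᶠ n in atTop, σ (ψ n) ≤ t - T :=
        (hσ.comp hψ.tendsto_atTop).eventually (eventually_le_atBot (t - T))
      have hTle : t - T ≤ t := by linarith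
      have hcomp : Tendsto (fun n => U t (t - T) (w (ψ n))) atTop (𝓝 x) := by
        have hgψ : Tendsto (fun n => U t (σ (ψ n)) (z (ψ n))) atTop (𝓝 x) :=
          hglim.comp hψ.tendsto_atTop
        refine hgψ.congr' ?_
        filter_upwards [hev] with n hn
        exact (hU2 hn hTle (z (ψ n))).symm
      have := hTclosed t (fun n => w (ψ n)) a x hwconv hcomp
      exact ⟨a, haA, this⟩
    rw [hAeq t]
    exact closure_minimal hstar hSclosed
  -- Step (iter): `A t ⊆ U t (t - n T) '' A (t - n T)`.
  have iter : ∀ (n : ℕ) (t σ : ℝ), σ = t - n * T → A t ⊆ U t σ '' A σ := by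
    intro n
    induction n with
    | zero =>
      intro t σ h
      have : σ = t := by simpa using h
      subst this
      exact fun x hx => ⟨x, hx, hU1 σ x⟩
    | succ n ih =>
      intro t σ h
      have h1 : σ = (t - T) - n * T := by rw [h]; push_cast; ring
      have hσle : σ ≤ t - T := by
        have : (0:ℝ) ≤ n * T := by positivity
        linarith [h1]
      have hTle : t - T ≤ t := by linarith
      intro x hx
      obtain ⟨w, hw, hwx⟩ := stepT t hx
      obtain ⟨v, hv, hvw⟩ := ih (t - T) σ h1 hw
      exact ⟨v, hv, by rw [← hU2 hσle hTle v, hvw, hwx]⟩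
  -- Step (fwd): forward inclusion.
  have fwd : ∀ (σ t : ℝ), σ ≤ t → ∀ y ∈ A σ, U t σ y ∈ A t := by
    intro τ0 t ht y hy
    have hch : ∀ n : ℕ, ∃ w : X (τ0 - (n + 1) * T), w ∈ A (τ0 - (n + 1) * T) ∧
        U τ0 (τ0 - (n + 1) * T) w = y := by
      intro n
      obtain ⟨w, hw, hwy⟩ := iter (n + 1) τ0 (τ0 - (n + 1) * T) (by push_cast; ring) hy
      exact ⟨w, hw, hwy⟩
    choose w hw hwy using hch
    set τ' : ℕ → ℝ := fun n => τ0 - (n + 1) * T with hτ'def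
    have hτ'le : ∀ n : ℕ, τ' n ≤ τ0 := by
      intro n
      have hn : (0:ℝ) ≤ (n : ℝ) := Nat.cast_nonneg n
      simp only [hτ'def]
      nlinarith
    have hτ'bot : Tendsto τ' atTop atBot := by
      have h1 : Tendsto (fun n : ℕ => ((n:ℝ) + 1) * T) atTop atTop :=
        (tendsto_atTop_add_const_right atTop 1 tendsto_natCast_atTop_atTop).atTop_mul_const hT
      have h2 : Tendsto (fun n : ℕ => τ0 + -(((n:ℝ) + 1) * T)) atTop atBot :=
        tendsto_atBot_add_const_left atTop τ0 (tendsto_neg_atTop_atBot.comp h1)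
      refine h2.congr (fun n => ?_)
      simp only [hτ'def]; ring
    have hwR : ∀ n, ‖w n‖ ≤ R0 := fun n => mem_closedBall_zero_iff.1 (hbd _ (hw n))
    have hconst : ∀ n, U t (τ' n) (w n) = U t τ0 y := by
      intro n
      rw [← hU2 (hτ'le n) ht (w n), hwy n]
    have hmem : U t τ0 y ∈ AStar U t := by
      refine ⟨τ', w, hτ'bot, ⟨R0, hwR⟩, id, strictMono_id, ?_⟩
      have : (fun n => U t (τ' n) (w n)) ∘ id = fun _ => U t τ0 y := funext fun n => hconst n
      rw [this]
      exact tendsto_const_nhds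
    exact aux_star_subset U A hAcpt hAattr t hmem
  -- Final assembly.
  intro τ0 t ht
  refine Set.Subset.antisymm ?_ ?_
  · rintro ζ ⟨y, hy, rfl⟩
    exact fwd τ0 t ht y hy
  · intro x hx
    obtain ⟨n, hn⟩ := exists_nat_ge ((t - τ0) / T)
    have hσle : t - n * T ≤ τ0 := by
      rw [div_le_iff₀ hT] at hn
      linarith
    obtain ⟨v, hv, hvx⟩ := iter n t (t - n * T) rfl hx
    refine ⟨U τ0 (t - n * T) v, fwd _ τ0 hσle v hv, ?_⟩
    rw [hU2 hσle ht v, hvx]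
end

section
/- Let 𝔎 = {K_t} be an invariant pullback attracting family for a process U(t,τ) satisfying the local Lipschitz estimate ‖U(t,τ)z₁ − U(t,τ)z₂‖_{X_t} ≤ Q(t−τ, r)‖z₁ − z₂‖_{X_τ} for all t ≥ τ and all z₁, z₂ in the r-ball of X_τ, where Q is positive and increasing in each argument. Then for every R > 0, δ_t(U(t,τ)𝔹_τ(R), K_t) → 0 as τ → −∞ uniformly for t in any compact interval [a,b]. -/
open Filter Metric Set Topology

theorem stmt9 {X : ℝ → Type*} [∀ t, NormedAddCommGroup (X t)]
    (U : ∀ t τ : ℝ, X τ → X t)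
    (hU1 : ∀ (t : ℝ) (x : X t), U t t x = x)
    (hU2 : ∀ {t τ σ : ℝ}, σ ≤ τ → τ ≤ t → ∀ x : X σ, U t τ (U τ σ x) = U t σ x)
    (K : ∀ t, Set (X t)) (hattr : PullbackAttracting U K)
    (hinv : ∀ τ t : ℝ, τ ≤ t → U t τ '' K τ = K t)
    (Q : ℝ → ℝ → ℝ) (hQpos : ∀ s r, 0 < Q s r)
    (hQmono1 : ∀ r, Monotone fun s => Q s r) (hQmono2 : ∀ s, Monotone (Q s))
    (hlip : ∀ τ t : ℝ, τ ≤ t → ∀ r : ℝ, ∀ z1 z2 : X τ, ‖z1‖ ≤ r → ‖z2‖ ≤ r →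
      ‖U t τ z1 - U t τ z2‖ ≤ Q (t - τ) r * ‖z1 - z2‖) :
    ∀ R > (0:ℝ), ∀ a b : ℝ, a ≤ b → ∀ ϱ > (0:ℝ), ∃ τ0 ≤ a, ∀ τ ≤ τ0, ∀ t ∈ Icc a b,
      ∀ x ∈ closedBall (0 : X τ) R, infDist (U t τ x) (K t) ≤ ϱ := by
  intro R hR a b hab ϱ hϱ
  obtain ⟨⟨RK, hRK, hKsub⟩, hatt⟩ := hattr
  set r : ℝ := RK + 1 with hr
  have hQb : 0 < Q (b - a) r := hQpos _ _
  set ε : ℝ := min 1 (ϱ / Q (b - a) r) with hε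
  have hεpos : 0 < ε := lt_min one_pos (div_pos hϱ hQb)
  obtain ⟨t0, ht0a, habs⟩ := (hatt ε hεpos).2 a R hR
  refine ⟨t0, ht0a, ?_⟩
  intro τ hτ t ht x hx
  have hτa : τ ≤ a := le_trans hτ ht0a
  have hz : U a τ x ∈ thickening ε (K a) :=
    habs τ hτ ⟨x, hx, rfl⟩
  rw [mem_thickening_iff] at hz
  obtain ⟨k, hk, hdk⟩ := hz
  have hknorm : ‖k‖ ≤ RK := by
    have := hKsub a hk
    simpa [mem_closedBall, dist_zero_right] using this
  have hznorm : ‖U a τ x‖ ≤ r := by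
    have h1 : ‖U a τ x‖ ≤ ‖U a τ x - k‖ + ‖k‖ := by
      simpa using norm_add_le (U a τ x - k) k
    have h2 : ‖U a τ x - k‖ < ε := by rwa [dist_eq_norm] at hdk
    have h3 : ε ≤ 1 := min_le_left _ _
    linarith
  have hkr : ‖k‖ ≤ r := by linarith
  have hlipbd := hlip a t ht.1 r (U a τ x) k hznorm hkr
  have hUk : U t a k ∈ K t := by
    rw [← hinv a t ht.1]; exact ⟨k, hk, rfl⟩
  have heq : U t a (U a τ x) = U t τ x := hU2 hτa ht.1 x
  have hQle : Q (t - a) r ≤ Q (b - a) r := hQmono1 r (by linarith [ht.2])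
  have hnk : ‖U a τ x - k‖ ≤ ε := by rw [← dist_eq_norm]; exact le_of_lt hdk
  have key : ‖U t τ x - U t a k‖ ≤ ϱ := by
    rw [← heq]
    calc ‖U t a (U a τ x) - U t a k‖ ≤ Q (t - a) r * ‖U a τ x - k‖ := hlipbd
      _ ≤ Q (b - a) r * ε := by
          apply mul_le_mul hQle hnk (norm_nonneg _) (le_of_lt hQb)
      _ ≤ Q (b - a) r * (ϱ / Q (b - a) r) := by
          exact mul_le_mul_of_nonneg_left (min_le_right _ _) (le_of_lt hQb)
      _ = ϱ := mul_div_cancel₀ _ (ne_of_gt hQb)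
  calc infDist (U t τ x) (K t) ≤ dist (U t τ x) (U t a k) := infDist_le_dist_of_mem hUk
    _ ≤ ϱ := by rwa [dist_eq_norm]
end

section
/- If a family 𝔎 = {K_t} of compact subsets K_t ⊂ X_t is uniformly bounded, pullback attracting, and invariant (U(t,τ)K_τ = K_t for t ≥ τ), then 𝔎 is the smallest element of the collection of uniformly bounded pullback attracting families of compact sets, hence coincides with the time-dependent global attractor. -/
open Filter Metric Set Topology

theorem stmt15 {X : ℝ → Type*} [∀ t, NormedAddCommGroup (X t)]
    (U : ∀ t τ : ℝ, X τ → X t)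
    (hU1 : ∀ (t : ℝ) (x : X t), U t t x = x)
    (hU2 : ∀ {t τ σ : ℝ}, σ ≤ τ → τ ≤ t → ∀ x : X σ, U t τ (U τ σ x) = U t σ x)
    (K : ∀ t, Set (X t)) (hcpt : ∀ t, IsCompact (K t))
    (hattr : PullbackAttracting U K)
    (hinv : ∀ τ t : ℝ, τ ≤ t → U t τ '' K τ = K t) :
    ∀ K' : ∀ t, Set (X t), (∀ t, IsCompact (K' t)) → PullbackAttracting U K' →
      ∀ t, K t ⊆ K' t := by
  intro K' hcpt' hattr' t x hx
  obtain ⟨R, hR, hKR⟩ := hattr.1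
  have hclosed : IsClosed (K' t) := (hcpt' t).isClosed
  rw [← hclosed.closure_eq]
  rw [Metric.mem_closure_iff]
  intro ε hε
  obtain ⟨-, habs⟩ := hattr'.2 ε hε
  obtain ⟨t0, ht0, h⟩ := habs t R hR
  have hsub := h t0 le_rfl
  have hxK : x ∈ U t t0 '' K t0 := by rw [hinv t0 t ht0]; exact hx
  obtain ⟨y, hy, hxy⟩ := hxK
  have : x ∈ thickening ε (K' t) := by
    refine hsub ⟨y, ?_, hxy⟩
    simpa [mem_closedBall, dist_zero_right] using (mem_closedBall.mp (hKR t0 hy))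
  rw [Metric.mem_thickening_iff] at this
  exact this
end
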